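/- Let G be a finite simple graph with at least one edge and with minimum vertex degree δ(G) ≥ 1. Then the bondage number satisfies b(G) ≤ Δ(G) + δ(G) − 1, where Δ(G) is the maximum vertex degree of G. -/

import Mathlib

/-- A finset `D` of vertices is a dominating set of `G` if every vertex not in `D`
is adjacent to some vertex in `D`. -/
def SimpleGraph.IsDominatingSet {V : Type*} (G : SimpleGraph V) (D : Finset V) : Prop :=
  ∀ v : V, v ∉ D → ∃ u ∈ D, G.Adj u v

/-- The domination number of `G`: the minimum cardinality of a dominating set. -/
noncomputable def SimpleGraph.dominationNumber {V : Type*} [Fintype V]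
    (G : SimpleGraph V) : ℕ :=
  sInf {k | ∃ D : Finset V, G.IsDominatingSet D ∧ D.card = k}

/-- The bondage number of `G`: the minimum cardinality of a set `B` of edges of `G`
whose removal increases the domination number. -/
noncomputable def SimpleGraph.bondageNumber {V : Type*} [Fintype V]
    (G : SimpleGraph V) : ℕ :=
  sInf {k | ∃ B : Finset (Sym2 V), ↑B ⊆ G.edgeSet ∧ B.card = k ∧
    G.dominationNumber < (G.deleteEdges ↑B).dominationNumber}

/-!
Take a vertex `v` of minimum degree and a neighbour `u` of it, and delete every edge at `u` or
at `v`: these are at most `Δ + δ - 1` edges, since `uv` is counted twice. Both ends become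
isolated, so every dominating set `D` of the new graph contains `u` and `v`; as `v` dominates `u`
in `G`, the set `D \ {u}` still dominates `G`, whence `γ(G) < γ(G - B)`.
-/

namespace SimpleGraph

variable {V : Type*}

lemma not_adj_deleteEdges_of_incidenceSet_subset (G : SimpleGraph V) {s : Set (Sym2 V)} {u : V}
    (hs : G.incidenceSet u ⊆ s) (w : V) : ¬ (G.deleteEdges s).Adj u w := by
  rw [deleteEdges_adj]
  exact fun ⟨huw, hnot⟩ => hnot (hs ((G.mem_incidenceSet u w).2 huw))

lemma IsDominatingSet.mem_of_forall_not_adj {G : SimpleGraph V} {D : Finset V}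
    (hD : G.IsDominatingSet D) {u : V} (hu : ∀ w, ¬ G.Adj u w) : u ∈ D := by
  by_contra huD
  obtain ⟨w, -, hwu⟩ := hD u huD
  exact hu w hwu.symm

lemma IsDominatingSet.erase_of_le {G H : SimpleGraph V} [DecidableEq V] {D : Finset V}
    (hD : H.IsDominatingSet D) (hHG : H ≤ G) {u v : V} (hu : ∀ w, ¬ H.Adj u w) (hvD : v ∈ D)
    (hvu : G.Adj v u) : G.IsDominatingSet (D.erase u) := by
  intro w hw
  by_cases hwu : w = u
  · subst hwu
    exact ⟨v, Finset.mem_erase.2 ⟨hvu.ne, hvD⟩, hvu⟩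
  · obtain ⟨x, hxD, hxw⟩ := hD w fun h => hw (Finset.mem_erase.2 ⟨hwu, h⟩)
    have hxu : x ≠ u := by
      rintro rfl
      exact hu w hxw
    exact ⟨x, Finset.mem_erase.2 ⟨hxu, hxD⟩, hHG hxw⟩

variable [Fintype V]

lemma dominationNumber_le_card {G : SimpleGraph V} {D : Finset V} (hD : G.IsDominatingSet D) :
    G.dominationNumber ≤ D.card :=
  Nat.sInf_le ⟨D, hD, rfl⟩

lemma exists_isDominatingSet_card_eq_dominationNumber (G : SimpleGraph V) :
    ∃ D : Finset V, G.IsDominatingSet D ∧ D.card = G.dominationNumber :=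
  Nat.sInf_mem (s := {k | ∃ D : Finset V, G.IsDominatingSet D ∧ D.card = k})
    ⟨_, Finset.univ, fun w hw => (hw (Finset.mem_univ w)).elim, rfl⟩

lemma bondageNumber_le_card {G : SimpleGraph V} {B : Finset (Sym2 V)} (hB : ↑B ⊆ G.edgeSet)
    (hlt : G.dominationNumber < (G.deleteEdges ↑B).dominationNumber) :
    G.bondageNumber ≤ B.card :=
  Nat.sInf_le ⟨B, hB, rfl, hlt⟩

lemma dominationNumber_lt_of_le_of_adj {G H : SimpleGraph V} (hHG : H ≤ G) {u v : V}
    (hu : ∀ w, ¬ H.Adj u w) (hv : ∀ w, ¬ H.Adj v w) (huv : G.Adj u v) :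
    G.dominationNumber < H.dominationNumber := by
  classical
  obtain ⟨D, hD, hDcard⟩ := H.exists_isDominatingSet_card_eq_dominationNumber
  have huD := hD.mem_of_forall_not_adj hu
  have hGD := dominationNumber_le_card (hD.erase_of_le hHG hu (hD.mem_of_forall_not_adj hv) huv.symm)
  rw [Finset.card_erase_of_mem huD] at hGD
  have := Finset.card_pos.2 ⟨u, huD⟩
  omega

variable (G : SimpleGraph V) [DecidableEq V] [DecidableRel G.Adj]

lemma card_incidenceFinset_union_le_of_adj {u v : V} (huv : G.Adj u v) :
    (G.incidenceFinset u ∪ G.incidenceFinset v).card ≤ G.degree u + G.degree v - 1 := by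
  have hinter : s(u, v) ∈ G.incidenceFinset u ∩ G.incidenceFinset v := by
    rw [Finset.mem_inter, mem_incidenceFinset, mem_incidenceFinset]
    exact ⟨G.mk'_mem_incidenceSet_left_iff.2 huv, G.mk'_mem_incidenceSet_right_iff.2 huv⟩
  have := Finset.card_union_add_card_inter (G.incidenceFinset u) (G.incidenceFinset v)
  have := Finset.card_pos.2 ⟨_, hinter⟩
  rw [card_incidenceFinset_eq_degree, card_incidenceFinset_eq_degree] at *
  omega

lemma bondageNumber_le_degree_add_degree_sub_one {u v : V} (huv : G.Adj u v) :
    G.bondageNumber ≤ G.degree u + G.degree v - 1 := by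
  set B := G.incidenceFinset u ∪ G.incidenceFinset v
  have hB : ↑B ⊆ G.edgeSet := by
    simpa [B, Finset.coe_union] using ⟨G.incidenceSet_subset u, G.incidenceSet_subset v⟩
  have hu := G.not_adj_deleteEdges_of_incidenceSet_subset (s := ↑B) (u := u) (by simp [B])
  have hv := G.not_adj_deleteEdges_of_incidenceSet_subset (s := ↑B) (u := v) (by simp [B])
  refine (bondageNumber_le_card hB ?_).trans (G.card_incidenceFinset_union_le_of_adj huv)
  exact dominationNumber_lt_of_le_of_adj (G.deleteEdges_le _) hu hv huv

end SimpleGraph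

theorem stmt_1_general {V : Type*} [Fintype V] (G : SimpleGraph V) [DecidableRel G.Adj]
    (hδ : 1 ≤ G.minDegree) :
    G.bondageNumber ≤ G.maxDegree + G.minDegree - 1 := by
  classical
  have : Nonempty V := by
    by_contra h
    have : Subsingleton V := not_nonempty_iff.1 h |>.instSubsingleton
    rw [G.minDegree_of_subsingleton] at hδ
    omega
  obtain ⟨v, hv⟩ := G.exists_minimal_degree_vertex
  obtain ⟨u, huv⟩ := (G.degree_pos_iff_exists_adj v).1 (by omega)
  have := G.bondageNumber_le_degree_add_degree_sub_one huv.symm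
  have := G.degree_le_maxDegree u
  omega

theorem stmt_1 {V : Type*} [Fintype V] (G : SimpleGraph V) [DecidableRel G.Adj]
    (hne : G.edgeSet.Nonempty) (hδ : 1 ≤ G.minDegree) :
    G.bondageNumber ≤ G.maxDegree + G.minDegree - 1 :=
  stmt_1_general G hδ
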